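/- arXiv:0910.2682 — 5 statements merged into one kernel-verified Lean document; each statement's English description precedes it below -/
import Mathlib

section
/- Let δ ∈ Γ with δ ≥ 0 and let x_1, …, x_n ∈ K, not all zero, satisfy v(x_1 + … + x_n) = min_i v(x_i). Then for every y ∈ K: rv_δ(y) = rv_δ(x_1 + … + x_n) if and only if there exist x_1′, …, x_n′ ∈ K with rv_δ(x_i′) = rv_δ(x_i) for each i and rv_δ(x_1′ + … + x_n′) = rv_δ(y). -/
/-!
The relation `RvEq v δ` is an equivalence relation on `K` as soon as `δ ≥ 0`, and it is
preserved by multiplication by any `u` with `v (u - 1) > δ`. If `rv_δ(y) = rv_δ(S)` for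
`S = ∑ xᵢ ≠ 0`, then `u = y / S` is such a unit, and `xᵢ' = u xᵢ` sums to `y`. Conversely, if
`rv_δ(xᵢ') = rv_δ(xᵢ)` then `v(xᵢ' - xᵢ) > v(xᵢ) + δ ≥ v(S) + δ` because `v(S)` is the minimum
of the `v(xᵢ)`, so `v(S' - S) > v(S) + δ`, i.e. `rv_δ(S') = rv_δ(S)`, and transitivity concludes.
-/

/-- `rv_δ(x) = rv_δ(y)`: either both are zero, or both are nonzero and
`v(x − y) > v(y) + δ`. -/
def RvEq {K : Type*} [Field K] {Γ : Type*} [AddCommGroup Γ] [LinearOrder Γ] [IsOrderedAddMonoid Γ]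
    (v : K → WithTop Γ) (δ : WithTop Γ) (x y : K) : Prop :=
  (x = 0 ∧ y = 0) ∨ (x ≠ 0 ∧ y ≠ 0 ∧ v y + δ < v (x - y))

lemma AddValuation.exists_coe_eq {R : Type*} [Ring R]
    {Γ : Type*} [AddCommGroup Γ] [LinearOrder Γ] [IsOrderedAddMonoid Γ]
    (v : R → WithTop Γ) (h0 : v 0 = ⊤) (h1 : v 1 ≠ ⊤)
    (hmul : ∀ x y, v (x * y) = v x + v y) (hadd : ∀ x y, min (v x) (v y) ≤ v (x + y)) :
    ∃ w : AddValuation R (WithTop Γ), ⇑w = v := by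
  obtain ⟨g, hg⟩ := WithTop.ne_top_iff_exists.1 h1
  have hgg : g + g = g := by
    have := hmul 1 1
    rw [mul_one, ← hg] at this
    exact_mod_cast this.symm
  have hv1 : v 1 = 0 := by rw [← hg, add_eq_left.1 hgg, WithTop.coe_zero]
  exact ⟨AddValuation.of v h0 hv1 hadd hmul, rfl⟩

section RvEq

variable {K : Type*} [Field K] {Γ : Type*} [AddCommGroup Γ] [LinearOrder Γ] [IsOrderedAddMonoid Γ]
  {v : AddValuation K (WithTop Γ)} {δ : Γ} {x y z : K}

lemma rvEq_of_lt_map_sub (hδ : 0 ≤ δ) (hy : y ≠ 0) (h : v y + δ < v (x - y)) :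
    RvEq v δ x y := by
  refine .inr ⟨fun hx => ?_, hy, h⟩
  rw [hx, zero_sub, v.map_neg] at h
  exact h.not_ge (le_add_of_nonneg_right (WithTop.coe_nonneg.2 hδ))

namespace RvEq

lemma map_eq (hδ : 0 ≤ δ) (h : RvEq v δ x y) : v x = v y := by
  rcases h with ⟨rfl, rfl⟩ | ⟨-, -, h⟩
  · rfl
  · exact v.map_eq_of_lt_sub ((le_add_of_nonneg_right (WithTop.coe_nonneg.2 hδ)).trans_lt h)

lemma lt_map_sub {c : WithTop Γ} (hc : c ≠ ⊤) (h : RvEq v δ x y) (hcy : c ≤ v y) :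
    c + δ < v (x - y) := by
  rcases h with ⟨rfl, rfl⟩ | ⟨-, -, h⟩
  · rw [sub_zero, v.map_zero]
    exact WithTop.add_lt_top.2 ⟨hc.lt_top, WithTop.coe_lt_top δ⟩
  · exact (add_le_add_left hcy _).trans_lt h

protected lemma refl (x : K) : RvEq v δ x x := by
  by_cases hx : x = 0
  · exact .inl ⟨hx, hx⟩
  · refine .inr ⟨hx, hx, ?_⟩
    rw [sub_self, v.map_zero]
    exact WithTop.add_lt_top.2 ⟨(v.ne_top_iff.2 hx).lt_top, WithTop.coe_lt_top δ⟩

protected lemma symm (hδ : 0 ≤ δ) (h : RvEq v δ x y) : RvEq v δ y x := by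
  have hv := h.map_eq hδ
  rcases h with ⟨rfl, rfl⟩ | ⟨hx, hy, hlt⟩
  · exact .inl ⟨rfl, rfl⟩
  · exact .inr ⟨hy, hx, by rwa [v.map_sub_swap, hv]⟩

protected lemma trans (hδ : 0 ≤ δ) (hxy : RvEq v δ x y) (hyz : RvEq v δ y z) :
    RvEq v δ x z := by
  have hv := hyz.map_eq hδ
  rcases hyz with ⟨rfl, rfl⟩ | ⟨-, hz, hlt⟩
  · exact hxy
  refine rvEq_of_lt_map_sub hδ hz ?_
  rw [← sub_add_sub_cancel x y z]
  exact v.map_lt_add (hxy.lt_map_sub (v.ne_top_iff.2 hz) hv.ge) hlt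

lemma lt_map_div_sub_one (h : RvEq v δ x y) (hy : y ≠ 0) : (δ : WithTop Γ) < v (x / y - 1) := by
  obtain ⟨-, rfl⟩ | ⟨-, -, hlt⟩ := h
  · exact absurd rfl hy
  calc (δ : WithTop Γ) = v y⁻¹ + (v y + δ) := by
        rw [← add_assoc, ← v.map_mul, inv_mul_cancel₀ hy, v.map_one, zero_add]
    _ < v y⁻¹ + v (x - y) := WithTop.add_lt_add_left (v.ne_top_iff.2 (inv_ne_zero hy)) hlt
    _ = v (x / y - 1) := by rw [← v.map_mul, div_sub_one hy, div_eq_inv_mul]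

end RvEq

lemma rvEq_mul_of_lt_map_sub_one (hδ : 0 ≤ δ) {u : K} (hu : (δ : WithTop Γ) < v (u - 1)) (x : K) :
    RvEq v δ (u * x) x := by
  rcases eq_or_ne x 0 with rfl | hx
  · exact .inl ⟨mul_zero u, rfl⟩
  refine rvEq_of_lt_map_sub hδ hx ?_
  rw [← sub_one_mul, v.map_mul, add_comm]
  exact WithTop.add_lt_add_right (v.ne_top_iff.2 hx) hu

lemma rvEq_sum_of_forall_map_sum_le {ι : Type*} {s : Finset ι} {x x' : ι → K} (hδ : 0 ≤ δ)
    (hx : ∀ i ∈ s, RvEq v δ (x' i) (x i)) (hs : ∑ i ∈ s, x i ≠ 0)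
    (hmin : ∀ i ∈ s, v (∑ i ∈ s, x i) ≤ v (x i)) :
    RvEq v δ (∑ i ∈ s, x' i) (∑ i ∈ s, x i) := by
  refine rvEq_of_lt_map_sub hδ hs ?_
  rw [← Finset.sum_sub_distrib]
  exact v.map_lt_sum (WithTop.add_ne_top.2 ⟨v.ne_top_iff.2 hs, WithTop.coe_ne_top⟩)
    fun i hi => (hx i hi).lt_map_sub (v.ne_top_iff.2 hs) (hmin i hi)

end RvEq

theorem stmt_3_general {K : Type*} [Field K] {Γ : Type*} [AddCommGroup Γ] [LinearOrder Γ] [IsOrderedAddMonoid Γ]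
    (v : K → WithTop Γ)
    (hv0 : ∀ x : K, v x = ⊤ ↔ x = 0)
    (hvmul : ∀ x y : K, v (x * y) = v x + v y)
    (hvadd : ∀ x y : K, min (v x) (v y) ≤ v (x + y))
    (δ : Γ) (hδ : 0 ≤ δ) (n : ℕ) (x : Fin n → K)
    (hne : ∃ i, x i ≠ 0)
    (hmin : v (∑ i, x i) =
      Finset.univ.inf' ⟨hne.choose, Finset.mem_univ _⟩ (fun i => v (x i)))
    (y : K) :
    RvEq v (δ : WithTop Γ) y (∑ i, x i) ↔
      ∃ x' : Fin n → K, (∀ i, RvEq v (δ : WithTop Γ) (x' i) (x i)) ∧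
        RvEq v (δ : WithTop Γ) (∑ i, x' i) y := by
  obtain ⟨v, rfl⟩ := AddValuation.exists_coe_eq v ((hv0 0).2 rfl)
    (mt (hv0 1).1 one_ne_zero) hvmul hvadd
  set S := ∑ i, x i
  have hle : ∀ i ∈ Finset.univ, v S ≤ v (x i) := fun i hi => hmin ▸ Finset.inf'_le _ hi
  have hS : S ≠ 0 := by
    obtain ⟨i, hi⟩ := hne
    intro hS
    have := hle i (Finset.mem_univ i)
    rw [hS, v.map_zero, top_le_iff, v.top_iff] at this
    exact hi this
  constructor
  · intro hy
    refine ⟨fun i => y / S * x i,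
      fun i => rvEq_mul_of_lt_map_sub_one hδ (hy.lt_map_div_sub_one hS) (x i), ?_⟩
    rw [← Finset.mul_sum, div_mul_cancel₀ y hS]
    exact RvEq.refl y
  · rintro ⟨x', hx', hy⟩
    exact (hy.symm hδ).trans hδ (rvEq_sum_of_forall_map_sum_le hδ (fun i _ => hx' i) hS hle)

/-- If `x_1, …, x_n` are not all zero and
`v(x_1 + … + x_n) = min_i v(x_i)`, then for every `y`:
`rv_δ(y) = rv_δ(x_1 + … + x_n)` iff there are `x_i′` with `rv_δ(x_i′) = rv_δ(x_i)`
for each `i` and `rv_δ(x_1′ + … + x_n′) = rv_δ(y)`. -/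
theorem stmt_3 {K : Type*} [Field K] {Γ : Type*} [AddCommGroup Γ] [LinearOrder Γ] [IsOrderedAddMonoid Γ]
    (v : K → WithTop Γ) (hsurj : Function.Surjective v)
    (hv0 : ∀ x : K, v x = ⊤ ↔ x = 0)
    (hvmul : ∀ x y : K, v (x * y) = v x + v y)
    (hvadd : ∀ x y : K, min (v x) (v y) ≤ v (x + y))
    (δ : Γ) (hδ : 0 ≤ δ) (n : ℕ) (x : Fin n → K)
    (hne : ∃ i, x i ≠ 0)
    (hmin : v (∑ i, x i) =
      Finset.univ.inf' ⟨hne.choose, Finset.mem_univ _⟩ (fun i => v (x i)))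
    (y : K) :
    RvEq v (δ : WithTop Γ) y (∑ i, x i) ↔
      ∃ x' : Fin n → K, (∀ i, RvEq v (δ : WithTop Γ) (x' i) (x i)) ∧
        RvEq v (δ : WithTop Γ) (∑ i, x' i) y :=
  stmt_3_general v hv0 hvmul hvadd δ hδ n x hne hmin y
end

section
/- Let δ ∈ Γ with δ ≥ 0, let x_1, …, x_n ∈ K with x_1 + … + x_n ≠ 0 and some x_i ≠ 0, and suppose ε := v(x_1 + … + x_n) − min_i v(x_i) satisfies ε > 0. Let γ ∈ Γ with γ ≥ δ + ε. If x_1′, …, x_n′ ∈ K satisfy rv_γ(x_i′) = rv_γ(x_i) for each i and z = x_1′ + … + x_n′, then rv_δ(z) = rv_δ(x_1 + … + x_n). -/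
section

variable {K Γ : Type*} [Field K] [AddCommGroup Γ] [LinearOrder Γ] [IsOrderedAddMonoid Γ]

theorem map_one_eq_zero_of_map_mul {v : K → WithTop Γ} (hv0 : ∀ x, v x = ⊤ ↔ x = 0)
    (hvmul : ∀ x y, v (x * y) = v x + v y) : v 1 = 0 := by
  have hone : v 1 ≠ ⊤ := (hv0 1).not.mpr one_ne_zero
  refine WithTop.add_left_cancel hone ?_
  rw [add_zero, ← hvmul, one_mul]

namespace RvEq

variable {w : AddValuation K (WithTop Γ)}

theorem lt_map_sub_s4 {γ c : WithTop Γ} {x' x : K} (h : RvEq w γ x' x) (hc : c ≤ w x + γ)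
    (hc_top : c < ⊤) : c < w (x' - x) := by
  rcases h with ⟨rfl, rfl⟩ | ⟨-, -, hlt⟩
  · rwa [sub_zero, AddValuation.map_zero]
  · exact hc.trans_lt hlt

theorem of_lt_map_sub {δ : Γ} {x y : K} (hδ : 0 ≤ δ) (hy : y ≠ 0)
    (h : w y + δ < w (x - y)) : RvEq w δ x y := by
  refine .inr ⟨?_, hy, h⟩
  rintro rfl
  rw [zero_sub, AddValuation.map_neg] at h
  exact (le_add_of_nonneg_right (WithTop.coe_nonneg.mpr hδ)).not_gt h

theorem sum {ι : Type*} {s : Finset ι} {x x' : ι → K} {δ : Γ} {γ : WithTop Γ} (hδ : 0 ≤ δ)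
    (hsum : ∑ i ∈ s, x i ≠ 0) (hle : ∀ i ∈ s, w (∑ i ∈ s, x i) + δ ≤ w (x i) + γ)
    (hx' : ∀ i ∈ s, RvEq w γ (x' i) (x i)) :
    RvEq w δ (∑ i ∈ s, x' i) (∑ i ∈ s, x i) := by
  have hbound_top : w (∑ i ∈ s, x i) + δ < ⊤ :=
    WithTop.add_lt_top.mpr ⟨(w.ne_top_iff.mpr hsum).lt_top, WithTop.coe_lt_top δ⟩
  refine of_lt_map_sub hδ hsum ?_
  rw [← Finset.sum_sub_distrib]
  exact w.map_lt_sum' hbound_top fun i hi => (hx' i hi).lt_map_sub_s4 (hle i hi) hbound_top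

end RvEq

end

theorem stmt_4_general {K : Type*} [Field K] {Γ : Type*} [AddCommGroup Γ] [LinearOrder Γ] [IsOrderedAddMonoid Γ]
    (v : K → WithTop Γ)
    (hv0 : ∀ x : K, v x = ⊤ ↔ x = 0)
    (hvmul : ∀ x y : K, v (x * y) = v x + v y)
    (hvadd : ∀ x y : K, min (v x) (v y) ≤ v (x + y))
    (δ : Γ) (hδ : 0 ≤ δ) (n : ℕ) (x : Fin n → K)
    (hne : ∃ i, x i ≠ 0) (hsum : ∑ i, x i ≠ 0)
    (ε : Γ)
    (hε : v (∑ i, x i) =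
      Finset.univ.inf' ⟨hne.choose, Finset.mem_univ _⟩ (fun i => v (x i)) + (ε : WithTop Γ))
    (γ : Γ) (hγ : δ + ε ≤ γ)
    (x' : Fin n → K) (z : K)
    (hx' : ∀ i, RvEq v (γ : WithTop Γ) (x' i) (x i))
    (hz : z = ∑ i, x' i) :
    RvEq v (δ : WithTop Γ) z (∑ i, x i) := by
  let w : AddValuation K (WithTop Γ) :=
    AddValuation.of v ((hv0 0).mpr rfl) (map_one_eq_zero_of_map_mul hv0 hvmul) hvadd hvmul
  have hle : ∀ i ∈ Finset.univ, w (∑ i, x i) + δ ≤ w (x i) + γ := fun i _ =>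
    calc v (∑ i, x i) + δ
        = Finset.univ.inf' ⟨hne.choose, Finset.mem_univ _⟩ (fun i => v (x i)) + ↑(ε + δ) := by
          rw [hε, add_assoc, WithTop.coe_add]
      _ ≤ v (x i) + γ := by
          gcongr
          · exact Finset.inf'_le _ (Finset.mem_univ i)
          · exact WithTop.coe_le_coe.mpr (add_comm ε δ ▸ hγ)
  subst hz
  exact RvEq.sum hδ hsum hle fun i _ => hx' i

/-- Suppose `x_1 + … + x_n ≠ 0`, some `x_i ≠ 0`, and
`ε := v(x_1 + … + x_n) − min_i v(x_i) > 0`.  If `γ ≥ δ + ε`,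
`rv_γ(x_i′) = rv_γ(x_i)` for each `i`, and `z = x_1′ + … + x_n′`, then
`rv_δ(z) = rv_δ(x_1 + … + x_n)`. -/
theorem stmt_4 {K : Type*} [Field K] {Γ : Type*} [AddCommGroup Γ] [LinearOrder Γ] [IsOrderedAddMonoid Γ]
    (v : K → WithTop Γ) (hsurj : Function.Surjective v)
    (hv0 : ∀ x : K, v x = ⊤ ↔ x = 0)
    (hvmul : ∀ x y : K, v (x * y) = v x + v y)
    (hvadd : ∀ x y : K, min (v x) (v y) ≤ v (x + y))
    (δ : Γ) (hδ : 0 ≤ δ) (n : ℕ) (x : Fin n → K)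
    (hne : ∃ i, x i ≠ 0) (hsum : ∑ i, x i ≠ 0)
    (ε : Γ) (hεpos : 0 < ε)
    (hε : v (∑ i, x i) =
      Finset.univ.inf' ⟨hne.choose, Finset.mem_univ _⟩ (fun i => v (x i)) + (ε : WithTop Γ))
    (γ : Γ) (hγ : δ + ε ≤ γ)
    (x' : Fin n → K) (z : K)
    (hx' : ∀ i, RvEq v (γ : WithTop Γ) (x' i) (x i))
    (hz : z = ∑ i, x' i) :
    RvEq v (δ : WithTop Γ) z (∑ i, x i) :=
  stmt_4_general v hv0 hvmul hvadd δ hδ n x hne hsum ε hε γ hγ x' z hx' hz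
end

section
/- Let x, y, z ∈ K with x ≠ 0, let γ ∈ Γ with 0 ≤ γ and γ < v(x + y) − v(x), and suppose v(z) > v(x) + γ. Then there exist x′, y′ ∈ K with rv_γ(x′) = rv_γ(x), rv_γ(y′) = rv_γ(y), and x′ + y′ = z. -/
theorem WithTop.eq_zero_of_add_self_eq {Γ : Type*} [AddCommMonoid Γ] [IsLeftCancelAdd Γ]
    {a : WithTop Γ} (ha : a ≠ ⊤) (h : a = a + a) : a = 0 :=
  (WithTop.add_left_cancel ha (by rw [add_zero]; exact h)).symm

namespace AddValuation

variable {K Γ : Type*} [Field K] [AddCommGroup Γ] [LinearOrder Γ] [IsOrderedAddMonoid Γ]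
  (v : AddValuation K (WithTop Γ))

theorem map_eq_of_lt_map_add {x y : K} (h : v x < v (x + y)) : v y = v x := by
  simpa using v.map_sub_eq_of_lt_right h

theorem rvEq_self {x : K} (hx : x ≠ 0) (γ : Γ) : RvEq v (γ : WithTop Γ) x x := by
  refine Or.inr ⟨hx, hx, ?_⟩
  rw [sub_self, v.map_zero, WithTop.lt_top_iff_ne_top, WithTop.add_ne_top]
  exact ⟨(v.ne_top_iff).mpr hx, WithTop.coe_ne_top⟩

theorem exists_rvEq_add_eq {x y z : K} (hx : x ≠ 0) {γ : Γ} (hγ0 : 0 ≤ γ)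
    (hγ : v x + (γ : WithTop Γ) < v (x + y)) (hz : v x + (γ : WithTop Γ) < v z) :
    ∃ x' y' : K, RvEq v (γ : WithTop Γ) x' x ∧ RvEq v (γ : WithTop Γ) y' y ∧ x' + y' = z := by
  have hle : v x ≤ v x + (γ : WithTop Γ) := le_add_of_nonneg_right (WithTop.coe_nonneg.mpr hγ0)
  have hvy : v y = v x := v.map_eq_of_lt_map_add (hle.trans_lt hγ)
  have hy : y ≠ 0 := (v.ne_top_iff).mp (hvy ▸ (v.ne_top_iff).mpr hx)
  have hzx : z - x ≠ 0 := by
    rintro h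
    rw [sub_eq_zero.mp h] at hz
    exact (hle.trans_lt hz).false
  refine ⟨x, z - x, v.rvEq_self hx γ, Or.inr ⟨hzx, hy, ?_⟩, add_sub_cancel _ _⟩
  calc v y + (γ : WithTop Γ) < min (v z) (v (x + y)) := hvy ▸ lt_min hz hγ
    _ ≤ v (z - (x + y)) := v.map_sub _ _
    _ = v (z - x - y) := by rw [sub_sub]

end AddValuation

theorem stmt_6_general {K : Type*} [Field K] {Γ : Type*} [AddCommGroup Γ] [LinearOrder Γ] [IsOrderedAddMonoid Γ]
    (v : K → WithTop Γ)
    (hv0 : ∀ x : K, v x = ⊤ ↔ x = 0)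
    (hvmul : ∀ x y : K, v (x * y) = v x + v y)
    (hvadd : ∀ x y : K, min (v x) (v y) ≤ v (x + y))
    (x y z : K) (hx : x ≠ 0) (γ : Γ) (hγ0 : 0 ≤ γ)
    (hγ : v x + (γ : WithTop Γ) < v (x + y))
    (hz : v x + (γ : WithTop Γ) < v z) :
    ∃ x' y' : K, RvEq v (γ : WithTop Γ) x' x ∧ RvEq v (γ : WithTop Γ) y' y ∧
      x' + y' = z := by
  have hv1 : v 1 = 0 :=
    WithTop.eq_zero_of_add_self_eq (fun h ↦ one_ne_zero ((hv0 1).mp h))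
      (by rw [← hvmul, one_mul])
  exact (AddValuation.of v ((hv0 0).mpr rfl) hv1 hvadd hvmul).exists_rvEq_add_eq hx hγ0 hγ hz

/-- If `x ≠ 0`, `0 ≤ γ < v(x + y) − v(x)` (i.e. `v(x) + γ < v(x+y)`),
and `v(z) > v(x) + γ`, then there are `x′, y′` with `rv_γ(x′) = rv_γ(x)`,
`rv_γ(y′) = rv_γ(y)`, and `x′ + y′ = z`. -/
theorem stmt_6 {K : Type*} [Field K] {Γ : Type*} [AddCommGroup Γ] [LinearOrder Γ] [IsOrderedAddMonoid Γ]
    (v : K → WithTop Γ) (hsurj : Function.Surjective v)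
    (hv0 : ∀ x : K, v x = ⊤ ↔ x = 0)
    (hvmul : ∀ x y : K, v (x * y) = v x + v y)
    (hvadd : ∀ x y : K, min (v x) (v y) ≤ v (x + y))
    (x y z : K) (hx : x ≠ 0) (γ : Γ) (hγ0 : 0 ≤ γ)
    (hγ : v x + (γ : WithTop Γ) < v (x + y))
    (hz : v x + (γ : WithTop Γ) < v z) :
    ∃ x' y' : K, RvEq v (γ : WithTop Γ) x' x ∧ RvEq v (γ : WithTop Γ) y' y ∧
      x' + y' = z :=
  stmt_6_general v hv0 hvmul hvadd x y z hx γ hγ0 hγ hz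
end

section
/- Suppose K is a henselian valued field of characteristic 0. Let α ∈ K, let f(x) = Σ_{i=0}^d a_i (x − α)^i be a polynomial over K, let β ∈ K, and let δ ∈ Γ with δ ≥ 0. Set m = max{ i ≤ d : ∀ j ≤ d, v(a_i(β − α)^i) ≤ v(a_j(β − α)^j) }. If f has a collision at β around α of severity strictly greater than 2^m·(v(m!) + δ), i.e., v(f(β)) > min_{j ≤ d} v(a_j(β − α)^j) + 2^m·(v(m!) + δ), then there exist λ ∈ K and n < m such that f^{(n)}(λ) = 0 and rv_δ(λ − α) = rv_δ(β − α). -/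
open Polynomial

/-!
Put `t = β - α`, let `c i` be the Taylor coefficients of `f` at `β` and `x i = v (c i * t ^ i)`.
Then `x i ≥ μ = v (a m * t ^ m)` for all `i`, `x m = μ` and `x 0 = v (f β)`. If
`x n + μ ≤ 2 x (n + 1) + 2 v (n + 1) + δ` held for every `n < m`, iterating would give
`v (f β) ≤ μ + 2 ^ m (v (m !) + δ)`, against the severity of the collision. So this fails for some
`n < m` (a drop), and then the constant and linear Taylor terms at `β` of the `n`-th Hasse
derivative of `f` dominate all higher ones. After rescaling, Hensel's lemma gives a root `λ` of it,
hence of `f^(n)`, with `v (λ - β) = v (c n / ((n + 1) c (n + 1))) > v t + δ`.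
-/

open Finset IsLocalRing
open scoped Nat

theorem HenselianLocalRing.exists_isUnit_isRoot {R : Type*} [CommRing R] [HenselianLocalRing R]
    (P : R[X]) (h0 : P.coeff 0 = 1) (h1 : P.coeff 1 = -1)
    (h : ∀ j, 2 ≤ j → P.coeff j ∈ maximalIdeal R) : ∃ u, IsUnit u ∧ P.IsRoot u := by
  have hmap : P.map (residue R) = 1 - X := by
    ext (_ | _ | j)
    · simp [h0]
    · simp [h1, coeff_one]
    · simpa [coeff_one, coeff_X, residue_eq_zero_iff] using h (j + 2) (by omega)
  -- The reverse of `P` is monic and reduces to `X ^ N - X ^ (N - 1)`, with the simple root `1`.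
  set N := P.natDegree
  have hN : 1 ≤ N := le_natDegree_of_ne_zero (by simp [h1])
  have hrev : P.reverse.map (residue R) = X ^ N - X ^ (N - 1) := by
    have hX : reflect N (X : (ResidueField R)[X]) = X ^ (N - 1) := by
      simpa [revAt_le hN] using reflect_monomial (R := ResidueField R) N 1
    rw [reverse, ← reflect_map, hmap, reflect_sub, reflect_one, hX]
  have hmonic : P.reverse.Monic := by
    rw [Monic, reverse_leadingCoeff, trailingCoeff,
      natTrailingDegree_eq_zero.mpr (.inr (by simp [h0])), h0]
  have heval : P.reverse.eval 1 ∈ maximalIdeal R := by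
    rw [← residue_eq_zero_iff, ← eval_one_map, hrev]
    simp
  have hderiv : IsUnit (P.reverse.derivative.eval 1) := by
    rw [← residue_ne_zero_iff_isUnit, ← eval_one_map, ← derivative_map, hrev, derivative_sub,
      derivative_X_pow, derivative_X_pow]
    simp [Nat.cast_sub hN]
  obtain ⟨a, ha, ha1⟩ := HenselianLocalRing.is_henselian _ hmonic 1 heval hderiv
  have hunit : IsUnit a := by
    rw [← residue_ne_zero_iff_isUnit, ← sub_add_cancel a 1, map_add,
      (residue_eq_zero_iff _).mpr ha1]
    simp
  let _ : Invertible (↑hunit.unit⁻¹ : R) := Units.invertible _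
  refine ⟨_, (hunit.unit⁻¹).isUnit, ?_⟩
  rw [IsRoot, ← eval₂_id, ← eval₂_reverse_eq_zero_iff]
  simpa using ha

namespace Polynomial

variable {R : Type*} [CommRing R]

theorem taylor_coeff_mul_pow_sub (a : ℕ → R) (α β : R) (d i : ℕ) :
    (taylor β (∑ j ∈ range (d + 1), C (a j) * (X - C α) ^ j)).coeff i * (β - α) ^ i =
      ∑ j ∈ range (d + 1), a j * (β - α) ^ j * j.choose i := by
  simp only [map_sum, taylor_apply, mul_comp, pow_comp, sub_comp, X_comp, C_comp,
    finsetSum_coeff, sum_mul]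
  refine sum_congr rfl fun j _ => ?_
  rw [show X + C β - C α = X + C (β - α) by rw [C_sub]; ring, coeff_C_mul, coeff_X_add_C_pow]
  rcases le_or_gt i j with h | h
  · calc _ = a j * ((β - α) ^ (j - i) * (β - α) ^ i) * j.choose i := by ring
      _ = _ := by rw [← pow_add, Nat.sub_add_cancel h]
  · simp [Nat.choose_eq_zero_of_lt h]

theorem taylor_hasseDeriv_coeff (f : R[X]) (β : R) (n j : ℕ) :
    (taylor β (hasseDeriv n f)).coeff j = (j + n).choose j * (taylor β f).coeff (j + n) := by
  rw [taylor_coeff, taylor_coeff, ← LinearMap.comp_apply, hasseDeriv_comp, LinearMap.smul_apply,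
    eval_smul, nsmul_eq_mul]

theorem iterate_derivative_eval_eq_zero_of_hasseDeriv {f : R[X]} {n : ℕ} {x : R}
    (h : (hasseDeriv n f).eval x = 0) : (derivative^[n] f).eval x = 0 := by
  rw [← factorial_smul_hasseDeriv]
  simp [h]

end Polynomial

theorem add_two_pow_nsmul_le_of_forall_le {M : Type*} [AddCommMonoid M] [PartialOrder M]
    [IsOrderedAddMonoid M] {x g : ℕ → M} {μ : M} {k : ℕ}
    (h : ∀ n < k, x n + μ ≤ 2 • x (n + 1) + g n) :
    x 0 + 2 ^ k • μ ≤ 2 ^ k • x k + μ + ∑ j ∈ range k, 2 ^ j • g j := by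
  induction k with
  | zero => simp [add_comm]
  | succ k ih =>
    calc x 0 + 2 ^ (k + 1) • μ = (x 0 + 2 ^ k • μ) + 2 ^ k • μ := by
          rw [pow_succ', mul_nsmul', two_nsmul, add_assoc]
      _ ≤ (2 ^ k • x k + μ + ∑ j ∈ range k, 2 ^ j • g j) + 2 ^ k • μ :=
          add_le_add (ih fun n hn => h n (by omega)) le_rfl
      _ = 2 ^ k • (x k + μ) + μ + ∑ j ∈ range k, 2 ^ j • g j := by rw [nsmul_add]; abel
      _ ≤ 2 ^ k • (2 • x (k + 1) + g k) + μ + ∑ j ∈ range k, 2 ^ j • g j :=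
          add_le_add (add_le_add (nsmul_le_nsmul_right (h k (by omega)) _) le_rfl) le_rfl
      _ = 2 ^ (k + 1) • x (k + 1) + μ + ∑ j ∈ range (k + 1), 2 ^ j • g j := by
          rw [sum_range_succ, nsmul_add, pow_succ, mul_nsmul']; abel

/-- In the Newton step, `X` and `ν + Y` are the valuations of the constant and linear Taylor terms
(scaled by powers of `t`), `μ` bounds all terms from below and `ρ` is the valuation of the step
relative to `t`: a drop makes the step exceed `δ` and all terms of degree `≥ 2` negligible. -/
theorem WithTop.newton_step_bounds {Γ : Type*} [AddCommGroup Γ] [LinearOrder Γ]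
    [IsOrderedAddMonoid Γ] {X Y ν ρ μ δ : WithTop Γ} (hX : X = ρ + ν + Y) (hY : μ ≤ Y) (hν : 0 ≤ ν) (hδ : 0 ≤ δ)
    (hρ : ρ ≠ ⊤) (hμ : μ ≠ ⊤) (hdrop : 2 • Y + (2 • ν + δ) < X + μ) :
    δ < ρ ∧ ∀ j, 2 ≤ j → X < μ + j • ρ := by
  have key : Y + ν + δ < ρ + μ := by
    have h : (Y + ν) + (Y + ν + δ) < (Y + ν) + (ρ + μ) := by
      convert hdrop using 1
      · abel
      · rw [hX]; abel
    have hYν : Y + ν ≠ ⊤ := fun htop => by rw [htop, top_add] at h; exact not_top_lt h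
    exact (WithTop.add_lt_add_iff_left hYν).mp h
  have hνδ : ν + δ < ρ := by
    refine (WithTop.add_lt_add_iff_left hμ).mp ?_
    calc μ + (ν + δ) ≤ Y + ν + δ := by rw [← add_assoc]; gcongr
      _ < ρ + μ := key
      _ = μ + ρ := add_comm _ _
  have hδρ : δ < ρ := (le_add_of_nonneg_left hν).trans_lt hνδ
  refine ⟨hδρ, fun j hj => ?_⟩
  calc X ≤ X + δ := le_add_of_nonneg_right hδ
    _ = ρ + (Y + ν + δ) := by rw [hX]; abel
    _ < ρ + (ρ + μ) := WithTop.add_lt_add_left hρ key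
    _ = μ + 2 • ρ := by abel
    _ ≤ μ + j • ρ := by gcongr; exact hδ.trans hδρ.le

namespace AddValuation

section Ring

variable {R : Type*} [CommRing R] {Γ₀ : Type*} [LinearOrderedAddCommMonoidWithTop Γ₀]
  (w : AddValuation R Γ₀)

theorem map_natCast_nonneg (n : ℕ) : 0 ≤ w n := by
  induction n with
  | zero => simp
  | succ n ih => rw [Nat.cast_succ]; exact w.map_le_add ih w.map_one.ge

theorem sum_two_pow_nsmul_le {δ : Γ₀} (hδ : 0 ≤ δ) (m : ℕ) :
    ∑ j ∈ range m, 2 ^ j • (2 • w ((j + 1 : ℕ) : R) + δ) ≤ 2 ^ m • (w (m ! : R) + δ) := by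
  induction m with
  | zero => simpa using hδ
  | succ m ih =>
    rw [sum_range_succ, Nat.factorial_succ, Nat.cast_mul, w.map_mul, pow_succ, mul_nsmul']
    calc _ ≤ 2 ^ m • (w (m ! : R) + δ) + 2 ^ m • (2 • w ((m + 1 : ℕ) : R) + δ) :=
          add_le_add ih le_rfl
      _ = 2 ^ m • (w (m ! : R) + δ + (2 • w ((m + 1 : ℕ) : R) + δ)) := (nsmul_add _ _ _).symm
      _ ≤ _ := by
          refine nsmul_le_nsmul_right ?_ _
          calc _ ≤ w (m ! : R) + δ + (2 • w ((m + 1 : ℕ) : R) + δ) + w (m ! : R) :=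
                le_add_of_nonneg_right (w.map_natCast_nonneg _)
            _ = _ := by abel

theorem le_map_sum_mul_choose {A : ℕ → R} {d m : ℕ} (hmin : ∀ j ≤ d, w (A m) ≤ w (A j))
    (i : ℕ) : w (A m) ≤ w (∑ j ∈ range (d + 1), A j * j.choose i) :=
  w.map_le_sum fun j hj => w.map_mul _ _ ▸
    le_add_of_le_of_nonneg (hmin j (Nat.lt_succ_iff.mp (mem_range.mp hj)))
      (w.map_natCast_nonneg _)

theorem map_sum_mul_choose_eq {A : ℕ → R} {d m : ℕ} (hmd : m ≤ d) (hAm : w (A m) ≠ ⊤)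
    (hlt : ∀ j ≤ d, m < j → w (A m) < w (A j)) :
    w (∑ j ∈ range (d + 1), A j * j.choose m) = w (A m) := by
  rw [← add_sum_erase _ _ (mem_range.mpr (Nat.lt_succ_of_le hmd)), Nat.choose_self, Nat.cast_one,
    mul_one]
  refine w.map_add_eq_of_lt_left (w.map_lt_sum hAm fun j hj => ?_)
  obtain ⟨hjm, hjd⟩ := mem_erase.mp hj
  rcases hjm.lt_or_gt with hj | hj
  · simp [Nat.choose_eq_zero_of_lt hj, hAm.lt_top]
  · rw [w.map_mul]
    exact (hlt j (Nat.lt_succ_iff.mp (mem_range.mp hjd)) hj).trans_le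
      (le_add_of_nonneg_right (w.map_natCast_nonneg _))

end Ring

variable {K : Type*} [Field K] {Γ : Type*} [AddCommGroup Γ] [LinearOrder Γ]
  [IsOrderedAddMonoid Γ] (w : AddValuation K (WithTop Γ))

theorem exists_two_nsmul_add_lt (x : ℕ → WithTop Γ) {μ δ : WithTop Γ} (hμ : μ ≠ ⊤)
    (hδ : 0 ≤ δ) {m : ℕ} (hxm : x m = μ) (hcol : μ + 2 ^ m • (w (m ! : K) + δ) < x 0) :
    ∃ n < m, 2 • x (n + 1) + (2 • w ((n + 1 : ℕ) : K) + δ) < x n + μ := by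
  by_contra! h
  have key := add_two_pow_nsmul_le_of_forall_le (g := fun j => 2 • w ((j + 1 : ℕ) : K) + δ) h
  rw [hxm] at key
  have hμm : 2 ^ m • μ ≠ ⊤ := by
    lift μ to Γ using hμ
    rw [← WithTop.coe_nsmul]
    exact WithTop.coe_ne_top
  have hx0 : x 0 ≤ μ + ∑ j ∈ range m, 2 ^ j • (2 • w ((j + 1 : ℕ) : K) + δ) :=
    (WithTop.add_le_add_iff_right hμm).mp (key.trans_eq (by abel))
  exact (hcol.trans_le (hx0.trans (add_le_add le_rfl (w.sum_two_pow_nsmul_le hδ m)))).false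

theorem rvEq_of_add_lt {δ : WithTop Γ} (hδ : 0 ≤ δ) {x y : K} (hy : y ≠ 0)
    (h : w y + δ < w (x - y)) : RvEq w δ x y := by
  refine .inr ⟨fun hx => ?_, hy, h⟩
  rw [hx, zero_sub, w.map_neg] at h
  exact (le_add_of_nonneg_right hδ).not_gt h

theorem map_eq_zero_of_isUnit {O : Subring K} (hO : ∀ x, x ∈ O ↔ 0 ≤ w x) {x : O}
    (hx : IsUnit x) : w x = 0 := by
  obtain ⟨y, hxy⟩ := hx.exists_right_inv
  have h := w.map_mul x y
  rw [← Subring.coe_mul, hxy, Subring.coe_one, w.map_one] at h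
  exact ((add_eq_zero_iff_of_nonneg ((hO _).1 x.2) ((hO _).1 y.2)).1 h.symm).1

theorem exists_map_eq_zero_isRoot {O : Subring K} (hO : ∀ x, x ∈ O ↔ 0 ≤ w x)
    [HenselianLocalRing O] (P : K[X]) (h0 : P.coeff 0 = 1) (h1 : P.coeff 1 = -1)
    (h : ∀ j, 2 ≤ j → 0 < w (P.coeff j)) : ∃ u, w u = 0 ∧ P.IsRoot u := by
  have hnonneg : ∀ j, 0 ≤ w (P.coeff j) := by
    rintro (_ | _ | j)
    · simp [h0]
    · simp [h1]
    · exact (h _ (by omega)).le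
  have hP : (P.coeffs : Set K) ⊆ O := fun c hc => by
    obtain ⟨n, -, rfl⟩ := mem_coeffs_iff.mp hc
    exact (hO _).2 (hnonneg n)
  obtain ⟨u, hu, hroot⟩ := HenselianLocalRing.exists_isUnit_isRoot (P.toSubring O hP)
    (Subtype.ext (by simp [coeff_toSubring, h0])) (Subtype.ext (by simp [coeff_toSubring, h1]))
    fun j hj hunit => (h j hj).ne' <| by
      simpa [coeff_toSubring] using w.map_eq_zero_of_isUnit hO hunit
  refine ⟨u, w.map_eq_zero_of_isUnit hO hu, ?_⟩
  simpa [map_toSubring] using hroot.map (f := O.subtype)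

theorem exists_isRoot_of_dominant_linear_term {O : Subring K} (hO : ∀ x, x ∈ O ↔ 0 ≤ w x)
    [HenselianLocalRing O] (P : K[X]) (h0 : P.coeff 0 ≠ 0) (h1 : P.coeff 1 ≠ 0)
    (h : ∀ j, 2 ≤ j → w (P.coeff 0) < w (P.coeff j * (P.coeff 0 / P.coeff 1) ^ j)) :
    ∃ x, w x = w (P.coeff 0 / P.coeff 1) ∧ P.IsRoot x := by
  set s := -(P.coeff 0 / P.coeff 1)
  set Q := C (P.coeff 0)⁻¹ * P.comp (C s * X)
  have hQ : ∀ j, Q.coeff j = (P.coeff 0)⁻¹ * (P.coeff j * s ^ j) := fun j => by simp [Q]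
  have hpos : ∀ j, 2 ≤ j → 0 < w (Q.coeff j) := fun j hj => by
    have hval : w (P.coeff 0) + w (Q.coeff j) = w (P.coeff j * (P.coeff 0 / P.coeff 1) ^ j) := by
      rw [← w.map_mul, hQ, mul_inv_cancel_left₀ h0, w.map_mul, w.map_mul, w.map_pow, w.map_pow,
        w.map_neg]
    exact lt_of_add_lt_add_left (a := w (P.coeff 0)) (by rw [add_zero, hval]; exact h j hj)
  obtain ⟨u, hu, hroot⟩ := w.exists_map_eq_zero_isRoot hO Q (by simp [hQ, h0])
    (by rw [hQ, pow_one]; simp only [s]; field_simp) hpos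
  refine ⟨s * u, by rw [w.map_mul, hu, add_zero, w.map_neg], ?_⟩
  simpa [Q, IsRoot, h0] using hroot

theorem le_map_taylor_hasseDeriv_coeff_mul_pow {f : K[X]} {β t : K} {μ : WithTop Γ}
    (hle : ∀ i, μ ≤ w ((taylor β f).coeff i * t ^ i)) (n j : ℕ) (r : K) :
    μ + j • w r ≤ w ((taylor β (hasseDeriv n f)).coeff j * (r * t) ^ j) + w (t ^ n) := by
  calc μ + j • w r
      ≤ w ((j + n).choose j : K) + w ((taylor β f).coeff (j + n) * t ^ (j + n)) + w (r ^ j) := by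
        rw [w.map_pow]
        gcongr
        exact le_add_of_nonneg_of_le (w.map_natCast_nonneg _) (hle _)
    _ = _ := by
        rw [← w.map_mul, ← w.map_mul, ← w.map_mul, taylor_hasseDeriv_coeff]
        congr 1
        ring

theorem exists_hasseDeriv_eval_eq_zero {O : Subring K} (hO : ∀ x, x ∈ O ↔ 0 ≤ w x)
    [HenselianLocalRing O] (f : K[X]) (β t : K) (ht : t ≠ 0) {μ δ : WithTop Γ}
    (hμ : μ ≠ ⊤) (hδ : 0 ≤ δ) (hle : ∀ i, μ ≤ w ((taylor β f).coeff i * t ^ i)) {n : ℕ}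
    (hdrop : 2 • w ((taylor β f).coeff (n + 1) * t ^ (n + 1)) + (2 • w ((n + 1 : ℕ) : K) + δ)
      < w ((taylor β f).coeff n * t ^ n) + μ) :
    ∃ lam, (hasseDeriv n f).eval lam = 0 ∧ w t + δ < w (lam - β) := by
  set c := fun i => (taylor β f).coeff i
  have hfin := hdrop.ne_top
  have hδ' : δ ≠ ⊤ := fun h => hfin (by simp [h])
  have ht' : w t ≠ ⊤ := w.ne_top_iff.mpr ht
  by_cases hcn : c n = 0
  · refine ⟨β, by rwa [← taylor_coeff], ?_⟩
    rw [sub_self, w.map_zero]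
    exact WithTop.add_lt_top.mpr ⟨ht'.lt_top, hδ'.lt_top⟩
  have hN : ((n + 1 : ℕ) : K) ≠ 0 := fun h => hfin (by simp [h, two_nsmul])
  have hc : c (n + 1) ≠ 0 := fun h => hfin (by simp [c] at h; simp [h, two_nsmul])
  have hD : ((n + 1 : ℕ) : K) * (c (n + 1) * t ^ (n + 1)) ≠ 0 :=
    mul_ne_zero hN (mul_ne_zero hc (pow_ne_zero _ ht))
  set r := c n * t ^ n / (((n + 1 : ℕ) : K) * (c (n + 1) * t ^ (n + 1)))
  obtain ⟨hδr, hgrow⟩ := WithTop.newton_step_bounds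
    (by rw [← w.map_mul, ← w.map_mul, mul_assoc, div_mul_cancel₀ _ hD] :
      w (c n * t ^ n) = w r + w ((n + 1 : ℕ) : K) + w (c (n + 1) * t ^ (n + 1)))
    (hle _) (w.map_natCast_nonneg _) hδ
    (w.ne_top_iff.mpr (div_ne_zero (mul_ne_zero hcn (pow_ne_zero _ ht)) hD)) hμ hdrop
  set P := taylor β (hasseDeriv n f)
  have hP0 : P.coeff 0 = c n := by
    simp only [P, taylor_hasseDeriv_coeff, zero_add, Nat.choose_zero_right, Nat.cast_one, one_mul,
      c]
  have hP1 : P.coeff 1 = ((n + 1 : ℕ) : K) * c (n + 1) := by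
    simp only [P, taylor_hasseDeriv_coeff, Nat.choose_one_right, add_comm 1 n, c]
  have hratio : P.coeff 0 / P.coeff 1 = r * t := by
    rw [hP0, hP1]
    simp only [r]
    field_simp
    ring
  obtain ⟨x, hx, hroot⟩ := w.exists_isRoot_of_dominant_linear_term hO P (hP0 ▸ hcn)
    (hP1 ▸ mul_ne_zero hN hc) fun j hj => by
      rw [hratio]
      refine lt_of_add_lt_add_right (a := w (t ^ n)) ?_
      rw [← w.map_mul, hP0]
      exact (hgrow j hj).trans_le (w.le_map_taylor_hasseDeriv_coeff_mul_pow hle n j r)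
  refine ⟨x + β, by rwa [IsRoot, taylor_eval] at hroot, ?_⟩
  rw [add_sub_cancel_right, hx, hratio, w.map_mul, add_comm (w r)]
  exact WithTop.add_lt_add_left ht' hδr

end AddValuation

theorem stmt_9_general {K : Type*} [Field K]
    {Γ : Type*} [AddCommGroup Γ] [LinearOrder Γ] [IsOrderedAddMonoid Γ]
    (v : K → WithTop Γ)
    (hv0 : ∀ x : K, v x = ⊤ ↔ x = 0)
    (hvmul : ∀ x y : K, v (x * y) = v x + v y)
    (hvadd : ∀ x y : K, min (v x) (v y) ≤ v (x + y))
    (O : Subring K) (hO : ∀ x : K, x ∈ O ↔ 0 ≤ v x) [HenselianLocalRing O]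
    (α β : K) (d : ℕ) (a : ℕ → K) (f : K[X])
    (hf : f = ∑ i ∈ Finset.range (d + 1), C (a i) * (X - C α) ^ i)
    (δ : Γ) (hδ : 0 ≤ δ)
    (m : ℕ) (hmd : m ≤ d)
    (hmmin : ∀ j ≤ d, v (a m * (β - α) ^ m) ≤ v (a j * (β - α) ^ j))
    (hmmax : ∀ i ≤ d, (∀ j ≤ d, v (a i * (β - α) ^ i) ≤ v (a j * (β - α) ^ j)) → i ≤ m)
    (hcol : v (a m * (β - α) ^ m) + 2 ^ m • (v ((m.factorial : K)) + (δ : WithTop Γ))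
      < v (f.eval β)) :
    ∃ (lam : K) (n : ℕ), n < m ∧ (derivative^[n] f).eval lam = 0 ∧
      RvEq v (δ : WithTop Γ) (lam - α) (β - α) := by
  have hv1 : v 1 = 0 := by
    refine (WithTop.add_left_inj ((hv0 1).not.mpr one_ne_zero)).mp ?_
    rw [← hvmul, mul_one, add_zero]
  let w := AddValuation.of v ((hv0 0).mpr rfl) hv1 hvadd hvmul
  have hδ' : (0 : WithTop Γ) ≤ δ := WithTop.coe_nonneg.mpr hδ
  set t := β - α
  have hC : ∀ i, (taylor β f).coeff i * t ^ i = ∑ j ∈ range (d + 1), a j * t ^ j * j.choose i :=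
    hf ▸ taylor_coeff_mul_pow_sub a α β d
  have hμ : w (a m * t ^ m) ≠ ⊤ := fun h => by
    rw [show v (a m * t ^ m) = ⊤ from h, top_add] at hcol
    exact not_top_lt hcol
  have hlt : ∀ j ≤ d, m < j → w (a m * t ^ m) < w (a j * t ^ j) := fun j hj hmj =>
    lt_of_not_ge fun hle => (hmmax j hj fun k hk => hle.trans (hmmin k hk)).not_gt hmj
  obtain ⟨n, hnm, hdrop⟩ := w.exists_two_nsmul_add_lt (fun i => w ((taylor β f).coeff i * t ^ i))
    hμ hδ' (by rw [hC, w.map_sum_mul_choose_eq hmd hμ hlt])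
    (by rwa [taylor_coeff_zero, pow_zero, mul_one])
  have ht : t ≠ 0 := fun h => hμ (by rw [h, zero_pow (by omega), mul_zero, w.map_zero])
  obtain ⟨lam, hroot, hlam⟩ := w.exists_hasseDeriv_eval_eq_zero hO f β t ht hμ hδ'
    (fun i => hC i ▸ w.le_map_sum_mul_choose hmmin i) hdrop
  exact ⟨lam, n, hnm, iterate_derivative_eval_eq_zero_of_hasseDeriv hroot,
    w.rvEq_of_add_lt hδ' ht (by rwa [sub_sub_sub_cancel_right])⟩

/-- Let `K` be henselian of characteristic `0`,
`f(x) = Σ_{i=0}^d a_i (x − α)^i`, `δ ≥ 0`, and let `m` be the largest `i ≤ d`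
such that `v(a_i(β − α)^i) ≤ v(a_j(β − α)^j)` for all `j ≤ d`.  If `f` has a
collision at `β` around `α` of severity `> 2^m·(v(m!) + δ)`, then there are
`λ ∈ K` and `n < m` with `f^{(n)}(λ) = 0` and `rv_δ(λ − α) = rv_δ(β − α)`. -/
theorem stmt_9 {K : Type*} [Field K] [CharZero K]
    {Γ : Type*} [AddCommGroup Γ] [LinearOrder Γ] [IsOrderedAddMonoid Γ]
    (v : K → WithTop Γ) (hsurj : Function.Surjective v)
    (hv0 : ∀ x : K, v x = ⊤ ↔ x = 0)
    (hvmul : ∀ x y : K, v (x * y) = v x + v y)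
    (hvadd : ∀ x y : K, min (v x) (v y) ≤ v (x + y))
    (O : Subring K) (hO : ∀ x : K, x ∈ O ↔ 0 ≤ v x) [HenselianLocalRing O]
    (α β : K) (d : ℕ) (a : ℕ → K) (f : K[X])
    (hf : f = ∑ i ∈ Finset.range (d + 1), C (a i) * (X - C α) ^ i)
    (δ : Γ) (hδ : 0 ≤ δ)
    (m : ℕ) (hmd : m ≤ d)
    (hmmin : ∀ j ≤ d, v (a m * (β - α) ^ m) ≤ v (a j * (β - α) ^ j))
    (hmmax : ∀ i ≤ d, (∀ j ≤ d, v (a i * (β - α) ^ i) ≤ v (a j * (β - α) ^ j)) → i ≤ m)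
    (hcol : v (a m * (β - α) ^ m) + 2 ^ m • (v ((m.factorial : K)) + (δ : WithTop Γ))
      < v (f.eval β)) :
    ∃ (lam : K) (n : ℕ), n < m ∧ (derivative^[n] f).eval lam = 0 ∧
      RvEq v (δ : WithTop Γ) (lam - α) (β - α) :=
  stmt_9_general v hv0 hvmul hvadd O hO α β d a f hf δ hδ m hmd hmmin hmmax hcol
end

section
/- Let α ∈ K, let f(x) = Σ_{i=0}^d a_i (x − α)^i be a polynomial over K, and let β, β′ ∈ K with β ≠ α and v(β′ − β) > v(β − α) (i.e., rv(β′ − α) = rv(β − α)). Then f has a collision at β around α if and only if f has a collision at β′ around α. -/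
/-!
Put `x = β - α` and `y = β' - α`. Since `v (y - x) > v x`, also `v y = v x`, so the monomials
`a i * y ^ i` and `a i * x ^ i` have the same valuations and hence the same minimum `m`. Moreover
`y ^ i - x ^ i = (y - x) * ∑ j < i, y ^ j * x ^ (i - 1 - j)` has valuation `> v (x ^ i)`, so every
difference `a i * y ^ i - a i * x ^ i` has valuation `> m`. Thus `f β' - f β` has valuation `> m`,
and `v (f β) > m` iff `v (f β') > m`.
-/

open Polynomial Finset

namespace AddValuation

section Ring

variable {R Γ₀ : Type*} [Ring R] [LinearOrderedAddCommMonoidWithTop Γ₀]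
  (w : AddValuation R Γ₀)

theorem lt_map_add_iff_of_lt {g : Γ₀} {x y : R} (hy : g < w y) : g < w (x + y) ↔ g < w x := by
  refine ⟨fun h => ?_, fun h => w.map_lt_add h hy⟩
  simpa using w.map_lt_add h (show g < w (-y) by rwa [map_neg])

theorem lt_map_sum_iff_of_lt_map_sub {ι : Type*} {s : Finset ι} {f f' : ι → R} {g : Γ₀}
    (h : ∀ i ∈ s, g < w (f' i - f i)) :
    g < w (∑ i ∈ s, f' i) ↔ g < w (∑ i ∈ s, f i) := by
  by_cases hg : g = ⊤
  · simp [hg]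
  rw [← w.lt_map_add_iff_of_lt (x := ∑ i ∈ s, f i) (w.map_lt_sum hg h), ← sum_add_distrib]
  simp only [add_sub_cancel]

theorem map_mul_pow_eq_of_lt_sub {x y : R} (h : w x < w (y - x)) (c : R) (n : ℕ) :
    w (c * y ^ n) = w (c * x ^ n) := by
  rw [map_mul, map_mul, map_pow, map_pow, w.map_eq_of_lt_sub h]

end Ring

variable {K Γ₀ : Type*} [Field K] [LinearOrderedAddCommMonoidWithTop Γ₀] [Nontrivial Γ₀]
  (w : AddValuation K Γ₀)

theorem map_pow_lt_map_pow_sub_pow {x y : K} (h : w x < w (y - x)) {n : ℕ} (hn : n ≠ 0) :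
    w (x ^ n) < w (y ^ n - x ^ n) := by
  have hy : w y = w x := w.map_eq_of_lt_sub h
  have hx : x ≠ 0 := (w.ne_top_iff).1 h.ne_top
  obtain ⟨m, rfl⟩ := Nat.exists_eq_succ_of_ne_zero hn
  have hsum : w (x ^ m) ≤ w (∑ i ∈ range (m + 1), y ^ i * x ^ (m - i)) :=
    w.map_le_sum fun i hi => by
      rw [map_mul, map_pow w y, hy, ← map_pow, ← map_mul,
        pow_mul_pow_sub _ (mem_range_succ_iff.1 hi)]
  calc w (x ^ (m + 1)) = w (x ^ m) + w x := by rw [pow_succ, map_mul]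
    _ < w (x ^ m) + w (y - x) :=
      (add_lt_add_iff_right_of_ne_top ((w.ne_top_iff).2 (pow_ne_zero m hx))).2 h
    _ ≤ w (∑ i ∈ range (m + 1), y ^ i * x ^ (m - i)) + w (y - x) := add_le_add_left hsum _
    _ = w (y ^ (m + 1) - x ^ (m + 1)) := by
      rw [← map_mul, ← geom_sum₂_mul]
      simp only [Nat.add_sub_cancel]

theorem lt_map_sum_mul_pow_iff_of_lt_sub {x y : K} (h : w x < w (y - x)) (s : Finset ℕ)
    (a : ℕ → K) {g : Γ₀} (hg : ∀ i ∈ s, g ≤ w (a i * x ^ i)) :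
    g < w (∑ i ∈ s, a i * y ^ i) ↔ g < w (∑ i ∈ s, a i * x ^ i) := by
  rcases eq_or_ne g ⊤ with rfl | hg_top
  · simp
  refine w.lt_map_sum_iff_of_lt_map_sub fun i hi => ?_
  rw [← mul_sub]
  rcases eq_or_ne (a i * (y ^ i - x ^ i)) 0 with hzero | hne
  · rwa [hzero, map_zero, lt_top_iff_ne_top]
  obtain ⟨ha, hi0⟩ : a i ≠ 0 ∧ i ≠ 0 := by
    refine ⟨left_ne_zero_of_mul hne, ?_⟩
    rintro rfl
    simp at hne
  calc g ≤ w (a i * x ^ i) := hg i hi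
    _ < w (a i * (y ^ i - x ^ i)) := by
      rw [map_mul, map_mul]
      exact (add_lt_add_iff_right_of_ne_top ((w.ne_top_iff).2 ha)).2
        (w.map_pow_lt_map_pow_sub_pow h hi0)

end AddValuation

theorem stmt_16_general {K : Type*} [Field K] {Γ : Type*} [AddCommGroup Γ] [LinearOrder Γ] [IsOrderedAddMonoid Γ]
    (v : K → WithTop Γ)
    (hv0 : ∀ x : K, v x = ⊤ ↔ x = 0)
    (hvmul : ∀ x y : K, v (x * y) = v x + v y)
    (hvadd : ∀ x y : K, min (v x) (v y) ≤ v (x + y))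
    (α : K) (d : ℕ) (a : ℕ → K) (f : K[X])
    (hf : f = ∑ i ∈ Finset.range (d + 1), C (a i) * (X - C α) ^ i)
    (β β' : K)
    (hββ' : v (β - α) < v (β' - β)) :
    (((Finset.range (d + 1)).inf' ⟨0, Finset.mem_range.mpr (Nat.succ_pos d)⟩
        fun i => v (a i * (β - α) ^ i)) < v (f.eval β)) ↔
    (((Finset.range (d + 1)).inf' ⟨0, Finset.mem_range.mpr (Nat.succ_pos d)⟩
        fun i => v (a i * (β' - α) ^ i)) < v (f.eval β')) := by
  have hv1 : v 1 = 0 :=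
    (add_left_inj_of_ne_top (a := v 1) (by simp [hv0])).1 (by rw [← hvmul, one_mul, zero_add])
  let w : AddValuation K (WithTop Γ) := AddValuation.of v ((hv0 0).2 rfl) hv1 hvadd hvmul
  have hxy : w (β - α) < w (β' - α - (β - α)) := by rwa [sub_sub_sub_cancel_right]
  have heval : ∀ z, f.eval z = ∑ i ∈ range (d + 1), a i * (z - α) ^ i := fun z => by
    simp [hf, eval_finsetSum]
  have hterms : ∀ i, v (a i * (β' - α) ^ i) = v (a i * (β - α) ^ i) :=
    fun i => w.map_mul_pow_eq_of_lt_sub hxy (a i) i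
  simp only [heval, hterms]
  exact (w.lt_map_sum_mul_pow_iff_of_lt_sub hxy _ a fun i hi => inf'_le _ hi).symm

/-- If `f(x) = Σ_{i=0}^d a_i (x − α)^i`, `β ≠ α` and
`v(β′ − β) > v(β − α)` (i.e. `rv(β′ − α) = rv(β − α)`), then `f` has a collision
at `β` around `α` iff `f` has a collision at `β′` around `α`. -/
theorem stmt_16 {K : Type*} [Field K] {Γ : Type*} [AddCommGroup Γ] [LinearOrder Γ] [IsOrderedAddMonoid Γ]
    (v : K → WithTop Γ) (hsurj : Function.Surjective v)
    (hv0 : ∀ x : K, v x = ⊤ ↔ x = 0)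
    (hvmul : ∀ x y : K, v (x * y) = v x + v y)
    (hvadd : ∀ x y : K, min (v x) (v y) ≤ v (x + y))
    (α : K) (d : ℕ) (a : ℕ → K) (f : K[X])
    (hf : f = ∑ i ∈ Finset.range (d + 1), C (a i) * (X - C α) ^ i)
    (β β' : K) (hβ : β ≠ α)
    (hββ' : v (β - α) < v (β' - β)) :
    (((Finset.range (d + 1)).inf' ⟨0, Finset.mem_range.mpr (Nat.succ_pos d)⟩
        fun i => v (a i * (β - α) ^ i)) < v (f.eval β)) ↔
    (((Finset.range (d + 1)).inf' ⟨0, Finset.mem_range.mpr (Nat.succ_pos d)⟩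
        fun i => v (a i * (β' - α) ^ i)) < v (f.eval β')) :=
  stmt_16_general v hv0 hvmul hvadd α d a f hf β β' hββ'
end
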